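/- Let d ≥ 3 be an odd integer and set t = (d−1)/2. Define the t×t matrix A(P,d) whose k-th row (k = 1,…,t) is (b(kP)−2, k^{d−3}, k^{d−5}, …, k^2), and the t×t matrix D(P,d) whose k-th row is (k^{d−1}, k^{d−3}, …, k^2). Then 2·e_{d−1}·det D(P,d) = det A(P,d); equivalently, the lattice surface area surf(P) = 2·e_{d−1} of P satisfies surf(P) = det A(P,d) / det D(P,d). -/

import Mathlib

open Finset MeasureTheory Pointwise

noncomputable section

/-- The canonical embedding of `ℤ^d` into `ℝ^d`. -/
def intCast (d : ℕ) : (Fin d → ℤ) → (Fin d → ℝ) := fun v i => (v i : ℝ)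

/-- The set of lattice points of `ℝ^d`. -/
def latticePts (d : ℕ) : Set (Fin d → ℝ) := Set.range (intCast d)

/-- `G S` is the number of lattice points in `S`. -/
def G {d : ℕ} (S : Set (Fin d → ℝ)) : ℕ := (S ∩ latticePts d).ncard

/-- `ip S` is the number of lattice points in the interior of `S`. -/
def ip {d : ℕ} (S : Set (Fin d → ℝ)) : ℕ := (interior S ∩ latticePts d).ncard

/-- `bp S` is the number of lattice points on the boundary of `S`. -/
def bp {d : ℕ} (S : Set (Fin d → ℝ)) : ℕ := G S - ip S

/-! For odd `d`, reciprocity gives `b(nP) = E(n) + E(-n) = 2 ∑ₗ e_{2l} n^{2l}`, and since `e₀ = 1`,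
`b(kP) - 2 = ∑_{l < t} 2 e_{d-1-2l} k^{d-1-2l}`. So the first column of `A(P,d)` is the
combination of the columns of `D(P,d)` with coefficients `2e_{d-1}, 2e_{d-3}, …`, the other
columns agree, and multilinearity of the determinant gives `det A = 2 e_{d-1} det D`. -/

open Filter

lemma tendsto_intCast_cofinite_cocompact (d : ℕ) :
    Tendsto (intCast d) cofinite (cocompact _) := by
  have h := Tendsto.pi_map_coprodᵢ fun _ : Fin d => Int.tendsto_coe_cofinite
  rwa [coprodᵢ_cofinite, coprodᵢ_cocompact] at h

lemma Bornology.IsBounded.finite_inter_latticePts {d : ℕ} {S : Set (Fin d → ℝ)}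
    (hS : Bornology.IsBounded S) : (S ∩ latticePts d).Finite := by
  have hpre : (intCast d ⁻¹' closure S).Finite := by
    have h := eventually_cofinite.1 <| (tendsto_intCast_cofinite_cocompact d).eventually
      hS.isCompact_closure.compl_mem_cocompact
    simp only [not_not] at h
    exact h
  refine (hpre.image (intCast d)).subset ?_
  rintro _ ⟨hx, v, rfl⟩
  exact ⟨v, subset_closure hx, rfl⟩

lemma cast_bp_eq_sub {R : Type*} [AddGroupWithOne R] {d : ℕ} {S : Set (Fin d → ℝ)}
    (hS : Bornology.IsBounded S) : (bp S : R) = G S - ip S :=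
  Nat.cast_sub <| Set.ncard_le_ncard (Set.inter_subset_inter_left _ interior_subset)
    hS.finite_inter_latticePts

lemma G_zero_smul {d : ℕ} {P : Set (Fin d → ℝ)} (hP : P.Nonempty) : G ((0 : ℝ) • P) = 1 := by
  rw [G, Set.zero_smul_set hP, ← Set.singleton_zero, Set.inter_eq_left.2, Set.ncard_singleton]
  rintro _ rfl
  exact ⟨0, funext fun _ => Int.cast_zero⟩

lemma sum_mul_pow_add_sum_mul_neg_pow {R : Type*} [CommRing R] (f : ℕ → R) (x : R) (m : ℕ) :
    ∑ i ∈ range (2 * m), f i * x ^ i + ∑ i ∈ range (2 * m), f i * (-x) ^ i =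
      2 * ∑ l ∈ range m, f (2 * l) * x ^ (2 * l) := by
  induction m with
  | zero => simp
  | succ m ih =>
    rw [show 2 * (m + 1) = 2 * m + 1 + 1 from rfl, sum_range_succ, sum_range_succ, sum_range_succ,
      sum_range_succ, sum_range_succ, Even.neg_pow ⟨m, two_mul m⟩, Odd.neg_pow ⟨m, rfl⟩]
    linear_combination ih

lemma sum_range_succ_even_reflect {R : Type*} [AddCommMonoid R] (f : ℕ → R) (t : ℕ) :
    ∑ l ∈ range (t + 1), f (2 * l) = f 0 + ∑ l : Fin t, f (2 * t - 2 * l) := by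
  rw [← sum_range_reflect, sum_range_succ, Fin.sum_univ_eq_sum_range (fun l => f (2 * t - 2 * l)),
    add_comm]
  simp [Nat.mul_sub]

lemma bp_smul_eq_two_mul_sum_even {t : ℕ} {P : Set (Fin (2 * t + 1) → ℝ)}
    (hP : Bornology.IsBounded P) (e : ℕ → ℚ) (n : ℕ)
    (hG : ∑ i ∈ range (2 * t + 1 + 1), e i * (n : ℚ) ^ i = G ((n : ℝ) • P))
    (hip : ∑ i ∈ range (2 * t + 1 + 1), e i * (-(n : ℚ)) ^ i =
      (-1) ^ (2 * t + 1) * ip ((n : ℝ) • P)) :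
    (bp ((n : ℝ) • P) : ℚ) = 2 * ∑ l ∈ range (t + 1), e (2 * l) * (n : ℚ) ^ (2 * l) := by
  rw [Odd.neg_one_pow ⟨t, rfl⟩] at hip
  rw [show 2 * t + 1 + 1 = 2 * (t + 1) by ring] at hG hip
  rw [cast_bp_eq_sub (hP.smul₀ _), ← sum_mul_pow_add_sum_mul_neg_pow]
  linear_combination -hG - hip

/-- for an odd `d ≥ 3` and a `d`-dimensional lattice polytope `P`
with Ehrhart polynomial `∑ eᵢ xⁱ`, the surface area `2 e_{d-1}` satisfies
`2 e_{d-1} = det A(P,d) / det D(P,d)`. -/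
theorem surf_eq_det_ratio_odd (d : ℕ) (hd3 : 3 ≤ d) (hodd : Odd d)
    (P : Set (Fin d → ℝ))
    (hP : ∃ V : Finset (Fin d → ℤ), P = convexHull ℝ (intCast d '' ↑V))
    (hdim : (interior P).Nonempty)
    (e : ℕ → ℚ)
    (hE : ∀ n : ℕ, (∑ i ∈ Finset.range (d + 1), e i * (n : ℚ) ^ i) = G ((n : ℝ) • P))
    (hRec : ∀ n : ℕ, 1 ≤ n →
      (∑ i ∈ Finset.range (d + 1), e i * (-(n : ℚ)) ^ i) = (-1) ^ d * ip ((n : ℝ) • P))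
    (t : ℕ) (ht : t = (d - 1) / 2)
    (A D : Matrix (Fin t) (Fin t) ℚ)
    (hA : ∀ k j, A k j =
      if (j : ℕ) = 0 then (bp ((((k : ℕ) + 1 : ℕ) : ℝ) • P) : ℚ) - 2
      else ((k : ℕ) + 1 : ℚ) ^ (d - 1 - 2 * (j : ℕ)))
    (hD : ∀ k j, D k j = ((k : ℕ) + 1 : ℚ) ^ (d - 1 - 2 * (j : ℕ))) :
    2 * e (d - 1) * D.det = A.det := by
  obtain ⟨s, rfl⟩ := hodd
  obtain rfl : t = s := by omega
  have : NeZero t := ⟨by omega⟩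
  obtain ⟨V, rfl⟩ := hP
  have hPb : Bornology.IsBounded (convexHull ℝ (intCast (2 * t + 1) '' (V : Set _))) :=
    ((V.finite_toSet.image _).isCompact_convexHull ℝ).isBounded
  have he0 : e 0 = 1 := by
    simpa [sum_range_succ', G_zero_smul (hdim.mono interior_subset)] using hE 0
  have hcol : ∀ k, A k 0 = ∑ l : Fin t, (2 * e (2 * t - 2 * l)) • D k l := by
    intro k
    rw [hA, if_pos (by simp), bp_smul_eq_two_mul_sum_even hPb e _ (hE _) (hRec _ (by omega)),
      sum_range_succ_even_reflect (fun i => e i * _ ^ i)]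
    simp only [he0, pow_zero, mul_one, hD, add_tsub_cancel_right, smul_eq_mul, mul_add, mul_sum,
      mul_assoc, add_sub_cancel_left, Nat.cast_add, Nat.cast_one]
  have hA' : A = D.updateCol 0 (fun k => ∑ l : Fin t, (2 * e (2 * t - 2 * l)) • D k l) := by
    ext k j
    rcases eq_or_ne j 0 with rfl | hj
    · simp [hcol]
    · simp [hA, hD, hj, Fin.val_ne_zero_iff.2 hj]
  rw [hA', Matrix.det_updateCol_sum]
  simp
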